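/- arXiv:1810.05140 — 4 statements merged into one kernel-verified Lean document; each statement's English description precedes it below -/
import Mathlib

section
/- Let c, d be nonzero integers, ε > 0, a a point of the circle group 𝕋 = ℝ/ℤ, and B an open arc of 𝕋 (or B = 𝕋) with diameter at least ε, such that |d|·ε > gcd(c,d). Then there exists x ∈ 𝕋 such that d·x = a and c·x ∈ B. -/
/-!
The solutions of `d • x = a` are `x₀ + k / d`, `k ∈ ℤ`. By Bézout their `c`-multiples include every
point `c • x₀ + n • (gcd c d / d)`, a progression of step `gcd c d / |d| < ε`. An arc of diameter at
least `ε` is the image of an interval of length at least `ε`, so it contains a point of this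
progression.
-/

/-- `B` is an open arc of the circle `ℝ/ℤ`: the image of a nonempty bounded open interval. -/
def IsOpenArc (B : Set (AddCircle (1 : ℝ))) : Prop :=
  ∃ l u : ℝ, l < u ∧ B = ((↑) : ℝ → AddCircle (1 : ℝ)) '' Set.Ioo l u

open Set

theorem AddCircle.diam_coe_image_Ioo_le (p : ℝ) {l u : ℝ} (h : l ≤ u) :
    Metric.diam (((↑) : ℝ → AddCircle p) '' Ioo l u) ≤ u - l := by
  have hlip : LipschitzWith 1 ((↑) : ℝ → AddCircle p) :=
    LipschitzWith.mk_one fun x y => by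
      simpa only [dist_eq_norm, ← AddCircle.coe_sub] using QuotientAddGroup.norm_mk_le_norm
  simpa [Real.diam_Ioo h] using hlip.diam_image_le _ (Metric.isBounded_Ioo l u)

theorem exists_add_zsmul_mem_Ioo {G : Type*} [AddCommGroup G] [LinearOrder G]
    [IsOrderedAddMonoid G] [Archimedean G] {q l u : G} (hq : q ≠ 0) (h : |q| < u - l)
    (b : G) : ∃ n : ℤ, b + n • q ∈ Ioo l u := by
  obtain ⟨m, ⟨hlm, hmu⟩, -⟩ := existsUnique_add_zsmul_mem_Ioc (abs_pos.2 hq) b l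
  have hmem : b + m • |q| ∈ Ioo l u := ⟨hlm, hmu.trans_lt (lt_sub_iff_add_lt'.1 h)⟩
  rcases abs_choice q with hq' | hq'
  · exact ⟨m, hq' ▸ hmem⟩
  · exact ⟨-m, by rwa [neg_smul, ← smul_neg, ← hq']⟩

theorem AddCircle.exists_zsmul_eq_and_zsmul_eq (c : ℤ) {d : ℤ} (hd : d ≠ 0) (r : ℝ) (n : ℤ) :
    ∃ x : AddCircle (1 : ℝ), d • x = r ∧
      c • x = ↑(c * r / d + n * (Int.gcd c d / d)) := by
  have hdR : (d : ℝ) ≠ 0 := Int.cast_ne_zero.2 hd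
  have hint : ∀ k : ℤ, ((k : ℝ) : AddCircle (1 : ℝ)) = 0 := fun k =>
    (AddCircle.coe_eq_zero_iff 1).2 ⟨k, by simp⟩
  have hbez : ((Int.gcd c d : ℤ) : ℝ) = c * Int.gcdA c d + d * Int.gcdB c d := by
    exact_mod_cast Int.gcd_eq_gcd_ab c d
  refine ⟨↑((r + (n * Int.gcdA c d : ℤ)) / d), ?_, ?_⟩
  · rw [← AddCircle.coe_zsmul, zsmul_eq_mul, mul_div_cancel₀ _ hdR, AddCircle.coe_add, hint,
      add_zero]
  · have key : (c : ℝ) * ((r + (n * Int.gcdA c d : ℤ)) / d) =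
        c * r / d + n * (Int.gcd c d / d) + ((-(n * Int.gcdB c d) : ℤ) : ℝ) := by
      field_simp
      push_cast at hbez ⊢
      linear_combination (-(n : ℝ)) * hbez
    rw [← AddCircle.coe_zsmul, zsmul_eq_mul, key, AddCircle.coe_add, hint, add_zero]

theorem stmt0_general (c d : ℤ) (hd : d ≠ 0) (ε : ℝ)
    (a : AddCircle (1 : ℝ)) (B : Set (AddCircle (1 : ℝ)))
    (hB : B = Set.univ ∨ IsOpenArc B)
    (hdiam : ε ≤ Metric.diam B)
    (hgcd : (Int.gcd c d : ℝ) < (d.natAbs : ℝ) * ε) :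
    ∃ x : AddCircle (1 : ℝ), d • x = a ∧ c • x ∈ B := by
  obtain ⟨r, rfl⟩ := QuotientAddGroup.mk_surjective a
  rcases hB with rfl | ⟨l, u, hlu, rfl⟩
  · obtain ⟨x, hx, -⟩ := AddCircle.exists_zsmul_eq_and_zsmul_eq c hd r 0
    exact ⟨x, hx, trivial⟩
  have hq : |(Int.gcd c d / d : ℝ)| < u - l := by
    have hdpos : (0 : ℝ) < |(d : ℝ)| := abs_pos.2 (Int.cast_ne_zero.2 hd)
    rw [abs_div, Nat.abs_cast, div_lt_iff₀ hdpos, ← Int.cast_abs, ← Nat.cast_natAbs]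
    calc (Int.gcd c d : ℝ) < d.natAbs * ε := hgcd
      _ ≤ d.natAbs * (u - l) := by
        gcongr
        exact hdiam.trans (AddCircle.diam_coe_image_Ioo_le 1 hlu.le)
      _ = (u - l) * d.natAbs := mul_comm _ _
  have hq0 : (Int.gcd c d / d : ℝ) ≠ 0 :=
    div_ne_zero (Nat.cast_ne_zero.2 (Int.gcd_pos_of_ne_zero_right c hd).ne')
      (Int.cast_ne_zero.2 hd)
  obtain ⟨n, hn⟩ := exists_add_zsmul_mem_Ioo hq0 hq (c * r / d)
  obtain ⟨x, hdx, hcx⟩ := AddCircle.exists_zsmul_eq_and_zsmul_eq c hd r n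
  exact ⟨x, hdx, hcx ▸ ⟨_, by rwa [zsmul_eq_mul] at hn, rfl⟩⟩

theorem stmt0 (c d : ℤ) (hc : c ≠ 0) (hd : d ≠ 0) (ε : ℝ) (hε : 0 < ε)
    (a : AddCircle (1 : ℝ)) (B : Set (AddCircle (1 : ℝ)))
    (hB : B = Set.univ ∨ IsOpenArc B)
    (hdiam : ε ≤ Metric.diam B)
    (hgcd : (Int.gcd c d : ℝ) < (d.natAbs : ℝ) * ε) :
    ∃ x : AddCircle (1 : ℝ), d • x = a ∧ c • x ∈ B :=
  stmt0_general c d hd ε a B hB hdiam hgcd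
end

section
/- Let ξ be irrational and ε > 0. Then there exists L > 0 such that for every interval I ⊆ ℝ of length greater than L, the set {(x + ℤ, ξx + ℤ) : x ∈ I} is ε-dense in 𝕋², i.e., every point of 𝕋² is within distance ε of some point of this set. -/
/-! Since ξ is irrational, the multiples kξ are dense in 𝕋, so by compactness those with
|k| ≤ N are already ε-dense. Given a target (s, t), lift s to some y at the left end of the
interval; every x = y + k with |k| ≤ N still lies in the interval and lifts s, while
ξx = ξy + kξ, so it remains to pick k with kξ within ε of t - ξy. -/

open Metric

theorem DenseRange.exists_finset_forall_exists_dist_lt {X ι : Type*} [PseudoMetricSpace X]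
    [CompactSpace X] {f : ι → X} (hf : DenseRange f) {ε : ℝ} (hε : 0 < ε) :
    ∃ T : Finset ι, ∀ x, ∃ i ∈ T, dist x (f i) < ε := by
  obtain ⟨T, hT⟩ := isCompact_univ.elim_finite_subcover (fun i ↦ ball (f i) ε)
    (fun _ ↦ isOpen_ball) fun x _ ↦ Set.mem_iUnion.2 (hf.exists_dist_lt x hε)
  refine ⟨T, fun x ↦ ?_⟩
  simpa using hT (Set.mem_univ x)

theorem DenseRange.exists_forall_exists_abs_le_dist_lt {X : Type*} [PseudoMetricSpace X]
    [CompactSpace X] {f : ℤ → X} (hf : DenseRange f) {ε : ℝ} (hε : 0 < ε) :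
    ∃ N : ℕ, ∀ x, ∃ k : ℤ, |k| ≤ N ∧ dist x (f k) < ε := by
  obtain ⟨T, hT⟩ := hf.exists_finset_forall_exists_dist_lt hε
  refine ⟨T.sup Int.natAbs, fun x ↦ ?_⟩
  obtain ⟨k, hkT, hk⟩ := hT x
  refine ⟨k, ?_, hk⟩
  rw [Int.abs_eq_natAbs]
  exact_mod_cast Finset.le_sup (f := Int.natAbs) hkT

theorem AddCircle.exists_mem_Ioc_coe_eq {p : ℝ} [Fact (0 < p)] (a : ℝ) (s : AddCircle p) :
    ∃ y ∈ Set.Ioc a (a + p), (y : AddCircle p) = s :=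
  (AddCircle.coe_image_Ioc_eq p a).ge (Set.mem_univ s)

theorem AddCircle.coe_add_intCast_one (y : ℝ) (k : ℤ) :
    ((y + k : ℝ) : AddCircle (1 : ℝ)) = y := by
  rw [AddCircle.coe_add, ← zsmul_one, AddCircle.coe_zsmul, AddCircle.coe_period, smul_zero,
    add_zero]

theorem stmt2 (ξ : ℝ) (hξ : Irrational ξ) (ε : ℝ) (hε : 0 < ε) :
    ∃ L : ℝ, 0 < L ∧ ∀ a b : ℝ, L < b - a →
      ∀ p : AddCircle (1 : ℝ) × AddCircle (1 : ℝ),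
        ∃ x ∈ Set.Ioo a b,
          dist p (((x : AddCircle (1 : ℝ))), ((ξ * x : ℝ) : AddCircle (1 : ℝ))) < ε := by
  have hdense : DenseRange (· • (ξ : AddCircle (1 : ℝ)) : ℤ → AddCircle (1 : ℝ)) :=
    AddCircle.denseRange_zsmul_coe_iff.2 (by simpa using hξ)
  obtain ⟨N, hN⟩ := hdense.exists_forall_exists_abs_le_dist_lt hε
  refine ⟨2 * N + 1, by positivity, fun a b hab ⟨s, t⟩ ↦ ?_⟩
  obtain ⟨y, ⟨hay, hya⟩, rfl⟩ := AddCircle.exists_mem_Ioc_coe_eq (a + N) s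
  obtain ⟨k, hkN, hk⟩ := hN (t - (ξ * y : ℝ))
  have hk' : |(k : ℝ)| ≤ N := by exact_mod_cast hkN
  obtain ⟨hk₁, hk₂⟩ := abs_le.1 hk'
  refine ⟨y + k, ⟨by linarith, by linarith⟩, ?_⟩
  have hξx : ((ξ * (y + k) : ℝ) : AddCircle (1 : ℝ)) =
      k • (ξ : AddCircle (1 : ℝ)) + (ξ * y : ℝ) := by
    rw [mul_add, AddCircle.coe_add, add_comm, ← AddCircle.coe_zsmul, zsmul_eq_mul, mul_comm ξ]
  rw [Prod.dist_eq, AddCircle.coe_add_intCast_one, dist_self, hξx, ← dist_sub_eq_dist_add_left]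
  exact max_lt hε hk
end

section
/- Every infinite subset of an abelian group G of exponent n contains a subset of the form T + z, where z ∈ G and T is a d-round subset of G for some divisor d of n. -/
/-- `S` is a `d`-round subset of the abelian group `G`. -/
def IsRound {G : Type*} [AddCommGroup G] (d : ℕ) (S : Set G) : Prop :=
  1 < d ∧ S.Countable ∧ S.Infinite ∧ (∀ x ∈ S, d • x = 0) ∧
    ∀ e : ℕ, e ∣ d → e ≠ d → ∀ y : G, {x ∈ S | e • x = y}.Finite

/-! Among all `d > 0` such that `S` contains a translate of a countably infinite set killed by `d`
(`d = n` works, by the exponent), take the least one, with witness `T + z ⊆ S`. Replacing `d` by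
`gcd d n` keeps the property, so `d ∣ n`. If for a proper divisor `e` of `d` some fibre
`{x ∈ T | e • x = y}` were infinite, translating it by one of its points `x₀` would give an
infinite set killed by `e` whose translate by `x₀ + z` still lies in `S`, contradicting minimality.
So `T` is `d`-round. -/

def HasTorsionTranslateIn {G : Type*} [AddCommGroup G] (S : Set G) (d : ℕ) : Prop :=
  ∃ (T : Set G) (z : G), T.Countable ∧ T.Infinite ∧ (∀ x ∈ T, d • x = 0) ∧
    (fun t => t + z) '' T ⊆ S

namespace HasTorsionTranslateIn

variable {G : Type*} [AddCommGroup G] {S : Set G}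

theorem of_forall_nsmul_eq_zero {n : ℕ} (hexp : ∀ x : G, n • x = 0) (hS : S.Infinite) :
    HasTorsionTranslateIn S n := by
  obtain ⟨T, hTS, hTc, hTi⟩ := hS.exists_subset_countable_infinite
  exact ⟨T, 0, hTc, hTi, fun x _ => hexp x, by simpa using hTS⟩

theorem gcd {d n : ℕ} (hexp : ∀ x : G, n • x = 0) (h : HasTorsionTranslateIn S d) :
    HasTorsionTranslateIn S (d.gcd n) := by
  obtain ⟨T, z, hTc, hTi, hT, hTS⟩ := h
  exact ⟨T, z, hTc, hTi, fun x hx => gcd_nsmul_eq_zero.2 ⟨hT x hx, hexp x⟩, hTS⟩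

theorem not_one : ¬HasTorsionTranslateIn S 1 := by
  rintro ⟨T, -, -, hTi, hT, -⟩
  exact hTi ((Set.finite_singleton (0 : G)).subset fun x hx => by simpa using hT x hx)

theorem of_infinite_fiber {T : Set G} {z y : G} {e : ℕ} (hTc : T.Countable)
    (hTS : (fun t => t + z) '' T ⊆ S) (hF : {x ∈ T | e • x = y}.Infinite) :
    HasTorsionTranslateIn S e := by
  obtain ⟨x₀, -, hx₀⟩ := hF.nonempty
  refine ⟨(fun x => x - x₀) '' {x ∈ T | e • x = y}, x₀ + z,
    (hTc.mono (Set.sep_subset _ _)).image _, hF.image (sub_left_injective.injOn), ?_, ?_⟩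
  · rintro _ ⟨x, ⟨-, hx⟩, rfl⟩
    rw [smul_sub, hx, hx₀, sub_self]
  · rintro _ ⟨_, ⟨x, ⟨hxT, -⟩, rfl⟩, rfl⟩
    exact hTS ⟨x, hxT, by beta_reduce; abel⟩

end HasTorsionTranslateIn

theorem isRound_of_minimal {G : Type*} [AddCommGroup G] {S T : Set G} {z : G} {d : ℕ}
    (hd : 1 < d) (hTc : T.Countable) (hTi : T.Infinite) (hT : ∀ x ∈ T, d • x = 0)
    (hTS : (fun t => t + z) '' T ⊆ S)
    (hmin : ∀ e, 0 < e → e < d → ¬HasTorsionTranslateIn S e) : IsRound d T := by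
  refine ⟨hd, hTc, hTi, hT, fun e he hed y => ?_⟩
  by_contra hF
  have he₀ : 0 < e := Nat.pos_of_dvd_of_pos he (by omega)
  exact hmin e he₀ (lt_of_le_of_ne (Nat.le_of_dvd (by omega) he) hed)
    (.of_infinite_fiber hTc hTS hF)

theorem stmt6_general {G : Type*} [AddCommGroup G] (n : ℕ) (hn : 0 < n)
    (hexp : ∀ x : G, n • x = 0)
    (S : Set G) (hS : S.Infinite) :
    ∃ (T : Set G) (z : G) (d : ℕ), d ∣ n ∧ IsRound d T ∧
      (fun t => t + z) '' T ⊆ S := by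
  classical
  have hex : ∃ d, 0 < d ∧ HasTorsionTranslateIn S d :=
    ⟨n, hn, .of_forall_nsmul_eq_zero hexp hS⟩
  obtain ⟨hd₀, hd⟩ := Nat.find_spec hex
  set d := Nat.find hex
  have hdn : d ∣ n := by
    have hle : d ≤ d.gcd n := Nat.find_min' hex ⟨Nat.gcd_pos_of_pos_right _ hn, hd.gcd hexp⟩
    exact Nat.gcd_eq_left_iff_dvd.1 ((Nat.gcd_le_left n hd₀).antisymm hle)
  have hd₁ : 1 < d := lt_of_le_of_ne hd₀ fun h => HasTorsionTranslateIn.not_one (h ▸ hd)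
  obtain ⟨T, z, hTc, hTi, hT, hTS⟩ := hd
  exact ⟨T, z, d, hdn, isRound_of_minimal hd₁ hTc hTi hT hTS
    fun e he hed h => Nat.find_min hex hed ⟨he, h⟩, hTS⟩

theorem stmt6 {G : Type*} [AddCommGroup G] (n : ℕ) (hn : 0 < n)
    (hexp : ∀ x : G, n • x = 0)
    (hmin : ∀ m : ℕ, 0 < m → (∀ x : G, m • x = 0) → n ≤ m)
    (S : Set G) (hS : S.Infinite) :
    ∃ (T : Set G) (z : G) (d : ℕ), d ∣ n ∧ IsRound d T ∧
      (fun t => t + z) '' T ⊆ S :=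
  stmt6_general n hn hexp S hS
end

section
/- Let 𝕋 = ℝ/ℤ and let (A_n)_{n∈F} be a finite family of open arcs of 𝕋 centered at 0, with integers a_n, such that Σ_{n∈F} |a_n|·δ(A_n) > 1. Then Σ_{n∈F} a_n·A_n = 𝕋, i.e., every element of 𝕋 can be written as Σ_{n∈F} a_n·x_n with x_n ∈ A_n for each n. -/
/-!
Pick radii `r n` with `A n = ↑(-r n, r n)`. Since `δ(A n) ≤ 2 r n`, the hypothesis gives
`R := ∑ |a n| r n > 1/2`. Represent `t` by a real `s` with `|s| ≤ 1/2 < R` and spread `s`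
proportionally over the arcs: `x n = sign (a n) · r n · s / R` lies in `(-r n, r n)` and
`∑ a n x n = s`.
-/

open Set Metric

namespace AddCircle

theorem lipschitzWith_coe (p : ℝ) : LipschitzWith 1 ((↑) : ℝ → AddCircle p) :=
  LipschitzWith.of_dist_le_mul fun x y => by
    rw [dist_eq_norm, dist_eq_norm, ← coe_sub, NNReal.coe_one, one_mul]
    exact QuotientAddGroup.norm_mk_le_norm

theorem diam_coe_image_Ioo_le_s8 (p : ℝ) {r : ℝ} (hr : 0 ≤ r) :
    diam ((↑) '' Ioo (-r) r : Set (AddCircle p)) ≤ 2 * r :=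
  calc diam ((↑) '' Ioo (-r) r : Set (AddCircle p))
      ≤ 1 * diam (Ioo (-r) r) := (lipschitzWith_coe p).diam_image_le _ (isBounded_Ioo _ _)
    _ = 2 * r := by rw [Real.diam_Ioo (by linarith), one_mul]; ring

theorem exists_coe_eq_of_abs_le_half_period {p : ℝ} (hp : p ≠ 0) (t : AddCircle p) :
    ∃ s : ℝ, |s| ≤ |p| / 2 ∧ (s : AddCircle p) = t := by
  induction t using QuotientAddGroup.induction_on with | H x => ?_
  refine ⟨x - round (p⁻¹ * x) * p, ?_, ?_⟩
  · rw [← norm_eq]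
    exact norm_le_half_period p hp
  · rw [coe_sub, ← zsmul_eq_mul, coe_zsmul, coe_period, smul_zero, sub_zero]

end AddCircle

theorem exists_mem_Ioo_sum_mul_eq {ι : Type*} (F : Finset ι) (a r : ι → ℝ)
    (hr : ∀ i ∈ F, 0 < r i) {s : ℝ} (hs : |s| < ∑ i ∈ F, |a i| * r i) :
    ∃ y : ι → ℝ, (∀ i ∈ F, y i ∈ Ioo (-r i) (r i)) ∧ ∑ i ∈ F, a i * y i = s := by
  set R := ∑ i ∈ F, |a i| * r i
  have hR : 0 < R := (abs_nonneg s).trans_lt hs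
  refine ⟨fun i => SignType.sign (a i) * r i * (s / R), fun i hi => ?_, ?_⟩
  · have hsign : |(SignType.sign (a i) : ℝ)| ≤ 1 := by
      rcases SignType.sign (a i) with _ | _ | _ <;> simp
    have hsR : |s / R| < 1 := by rwa [abs_div, abs_of_pos hR, div_lt_one hR]
    rw [mem_Ioo, ← abs_lt, abs_mul, abs_mul, abs_of_pos (hr i hi)]
    calc |(SignType.sign (a i) : ℝ)| * r i * |s / R| ≤ r i * |s / R| := by
          gcongr; exact mul_le_of_le_one_left (hr i hi).le hsign
      _ < r i := mul_lt_of_lt_one_right (hr i hi) hsR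
  · simp_rw [← mul_assoc, self_mul_sign, ← Finset.sum_mul]
    exact mul_div_cancel₀ s hR.ne'

theorem stmt8 (F : Finset ℕ) (A : ℕ → Set (AddCircle (1 : ℝ))) (a : ℕ → ℤ)
    (harc : ∀ n ∈ F, ∃ r : ℝ, 0 < r ∧
      A n = ((↑) : ℝ → AddCircle (1 : ℝ)) '' Set.Ioo (-r) r)
    (hsum : 1 < ∑ n ∈ F, ((a n).natAbs : ℝ) * Metric.diam (A n)) :
    ∀ t : AddCircle (1 : ℝ), ∃ x : ℕ → AddCircle (1 : ℝ),
      (∀ n ∈ F, x n ∈ A n) ∧ ∑ n ∈ F, a n • x n = t := by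
  intro t
  choose! r hr hA using harc
  obtain ⟨s, hs, rfl⟩ := AddCircle.exists_coe_eq_of_abs_le_half_period one_ne_zero t
  have hsR : |s| < ∑ n ∈ F, |(a n : ℝ)| * r n := by
    have : ∑ n ∈ F, ((a n).natAbs : ℝ) * diam (A n) ≤ 2 * ∑ n ∈ F, |(a n : ℝ)| * r n := by
      rw [Finset.mul_sum]
      refine Finset.sum_le_sum fun n hn => ?_
      rw [Nat.cast_natAbs, Int.cast_abs, mul_left_comm, hA n hn]
      exact mul_le_mul_of_nonneg_left
        (AddCircle.diam_coe_image_Ioo_le_s8 1 (hr n hn).le) (abs_nonneg _)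
    rw [abs_one] at hs
    linarith
  obtain ⟨y, hy, rfl⟩ := exists_mem_Ioo_sum_mul_eq F (fun n => (a n : ℝ)) r hr hsR
  refine ⟨fun n => y n, fun n hn => hA n hn ▸ mem_image_of_mem _ (hy n hn), ?_⟩
  simp only [← zsmul_eq_mul, AddCircle.coe_zsmul, QuotientAddGroup.mk_sum]
end
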